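/- Let T > 0, A > 0, κ ≥ 0, β ≥ 0 with κ + β > 0, B ∈ ℝ, let α₁, α₂, φ₁, φ₂ > 0, let Q̲ ≤ 0 ≤ Q̄ be integers with Q̲ < Q̄, and let δ̄ : [0, T] → ℝ be continuous. Then there exists a unique continuously differentiable function h = (h_{Q̲}, …, h_{Q̄}) : [0, T] → ℝ^{Q̄−Q̲+1} satisfying, for all t ∈ [0, T]: h_{Q̲}'(t) = (φ₁·𝟙_{Q̲ ≥ 0} + φ₂·𝟙_{Q̲ < 0})·Q̲², and for each q ∈ {Q̲+1, …, Q̄}, h_q'(t) = (φ₁·𝟙_{q ≥ 0} + φ₂·𝟙_{q < 0})·q² − sup_{δ ≥ B} A·exp(−(κ+β)·δ + β·δ̄(t))·(δ + h_{q−1}(t) − h_q(t)), with terminal conditions h_q(T) = −(α₁·𝟙_{q ≥ 0} + α₂·𝟙_{q < 0})·q² for all q ∈ {Q̲, …, Q̄}. -/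

import Mathlib

/-- `h : ℝ → ℤ → ℝ` solves the overselling HJB ODE system on `[0,T]`:
`h_{Q̲}'(t) = (φ₁·𝟙_{Q̲ ≥ 0} + φ₂·𝟙_{Q̲ < 0})·Q̲²`, for `Q̲ < q ≤ Q̄`
`h_q'(t) = (φ₁·𝟙_{q ≥ 0} + φ₂·𝟙_{q < 0})·q²
  − sup_{δ ≥ B} A·exp(−(κ+β)·δ + β·δ̄(t))·(δ + h_{q−1}(t) − h_q(t))`,
with terminal conditions `h_q(T) = −(α₁·𝟙_{q ≥ 0} + α₂·𝟙_{q < 0})·q²`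
for all `Q̲ ≤ q ≤ Q̄`. -/
def IsOversellHJBSolution (T A κ β B α₁ α₂ φ₁ φ₂ : ℝ) (Qlow Qbar : ℤ)
    (δbar : ℝ → ℝ) (h : ℝ → ℤ → ℝ) : Prop :=
  (∀ t ∈ Set.Icc (0 : ℝ) T,
    HasDerivWithinAt (fun s => h s Qlow)
      ((if 0 ≤ Qlow then φ₁ else φ₂) * (Qlow : ℝ) ^ 2) (Set.Icc 0 T) t) ∧
  (∀ q : ℤ, Qlow < q → q ≤ Qbar → ∀ t ∈ Set.Icc (0 : ℝ) T,
    HasDerivWithinAt (fun s => h s q)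
      ((if 0 ≤ q then φ₁ else φ₂) * (q : ℝ) ^ 2 -
        sSup ((fun δ => A * Real.exp (-(κ + β) * δ + β * δbar t) *
          (δ + h t (q - 1) - h t q)) '' Set.Ici B))
      (Set.Icc 0 T) t) ∧
  ∀ q : ℤ, Qlow ≤ q → q ≤ Qbar →
    h T q = -((if 0 ≤ q then α₁ else α₂) * (q : ℝ) ^ 2)

/-!
The supremum over spreads has a closed form: `δ ↦ e^{-γδ}(δ + w)` increases up to `1/γ - w` and
decreases afterwards, so on `δ ≥ B` it is maximal at `max B (1/γ - w)`. The resulting value is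
`e^{-γB}`-Lipschitz in `w = h_{q-1} - h_q`. The system is triangular: once `h_{q-1}` is known,
`h_q` solves a scalar terminal-value ODE whose right-hand side is globally Lipschitz in `h_q`,
because `A e^{β δ̄}` is bounded on `[0, T]`. Such an ODE has a solution on all of `[0, T]`:
truncating the state at its Grönwall a-priori bound makes the field bounded, so Picard–Lindelöf
applies on the whole interval, and the a-priori bound shows that the truncation never acts.
It is unique by Grönwall. Induction on `q`, starting from `Q̲`, solves the whole system.
-/

open Set Real
open scoped NNReal

theorem LipschitzWith.norm_le_add_mul {E F : Type*} [SeminormedAddCommGroup E]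
    [SeminormedAddCommGroup F] {f : E → F} {K : ℝ≥0} (hf : LipschitzWith K f) (x : E) :
    ‖f x‖ ≤ ‖f 0‖ + K * ‖x‖ := by
  have := hf.dist_le_mul x 0
  rw [dist_eq_norm, dist_eq_norm, sub_zero] at this
  linarith [norm_le_insert' (f x) (f 0)]

theorem exists_eq_isIntegralCurveOn_Icc_left {f : ℝ → ℝ → ℝ} {K : ℝ≥0} {a b : ℝ}
    (hab : a ≤ b) (hlip : ∀ t ∈ Icc a b, LipschitzWith K (f t))
    (hcont : ∀ x, ContinuousOn (f · x) (Icc a b)) (x₀ : ℝ) :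
    ∃ y : ℝ → ℝ, y a = x₀ ∧ IsIntegralCurveOn y f (Icc a b) := by
  obtain ⟨M, hM⟩ := isCompact_Icc.exists_bound_of_continuousOn (hcont 0)
  have hM₀ : 0 ≤ M := (norm_nonneg _).trans (hM a (left_mem_Icc.2 hab))
  have hgronwall_mono := gronwallBound_mono (norm_nonneg x₀) hM₀ K.2
  set R := gronwallBound ‖x₀‖ K M (b - a)
  have hR : 0 ≤ R := (norm_nonneg x₀).trans <|
    (gronwallBound_x0 ‖x₀‖ K M).symm.trans_le (hgronwall_mono (sub_nonneg.2 hab))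
  set clamp : ℝ → ℝ := fun x => projIcc (-R) R (by linarith) x
  have hclamp : ∀ x, ‖x‖ ≤ R → clamp x = x := fun x hx =>
    congrArg Subtype.val (projIcc_of_mem _ (abs_le.1 hx))
  set g : ℝ → ℝ → ℝ := fun t x => f t (clamp x)
  have hglip : ∀ t ∈ Icc a b, LipschitzWith K (g t) := fun t ht => by
    simpa [g, clamp, Function.comp_def] using
      (hlip t ht).comp ((LipschitzWith.subtype_val _).comp (LipschitzWith.projIcc _))
  have hgrowth : ∀ t ∈ Icc a b, ∀ x, ‖g t x‖ ≤ M + K * ‖x‖ := fun t ht x => by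
    have hgx := (hglip t ht).norm_le_add_mul x
    simp only [g, hclamp 0 (by simpa using hR)] at hgx
    linarith [hM t ht]
  set L : ℝ≥0 := ⟨M + K * R, by positivity⟩
  have hpl : IsPicardLindelof g ⟨a, left_mem_Icc.2 hab⟩ x₀ (L * ⟨b - a, sub_nonneg.2 hab⟩) 0 L K :=
    { lipschitzOnWith := fun t ht => (hglip t ht).lipschitzOnWith
      continuousOn := fun x _ => hcont (clamp x)
      norm_le := fun t ht x _ => by
        have hx : ‖clamp x‖ ≤ R := abs_le.2 (projIcc (-R) R _ x).2
        have hfx := (hlip t ht).norm_le_add_mul (clamp x)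
        have hKx : (K : ℝ) * ‖clamp x‖ ≤ K * R := by gcongr
        show ‖g t x‖ ≤ M + K * R
        linarith [hM t ht]
      mul_max_le := by simp [hab]; exact le_rfl }
  obtain ⟨y, hya, hy⟩ := hpl.exists_eq_forall_mem_Icc_hasDerivWithinAt₀
  have hyR : ∀ t ∈ Icc a b, ‖y t‖ ≤ R := fun t ht =>
    (norm_le_gronwallBound_of_norm_deriv_right_le (fun s hs => (hy s hs).continuousWithinAt)
      (fun s hs => (hy s (Ico_subset_Icc_self hs)).mono_of_mem_nhdsWithin
        (Icc_mem_nhdsGE_of_mem hs)) (congrArg norm hya).le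
      (fun s hs => (hgrowth s (Ico_subset_Icc_self hs) _).trans_eq (add_comm _ _)) t ht).trans
      (hgronwall_mono (by linarith [ht.2]))
  exact ⟨y, hya, fun t ht => by simpa [g, hclamp _ (hyR t ht)] using hy t ht⟩

theorem IsIntegralCurveOn.comp_reflect_Icc {E : Type*} [NormedAddCommGroup E]
    [NormedSpace ℝ E] {v : ℝ → E → E} {y : ℝ → E} {a b : ℝ}
    (h : IsIntegralCurveOn y v (Icc a b)) :
    IsIntegralCurveOn (fun t => y (a + b - t)) (fun t x => -v (a + b - t) x) (Icc a b) := by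
  intro t ht
  have hmaps : MapsTo (fun s => a + b - s) (Icc a b) (Icc a b) := fun s hs =>
    ⟨by linarith [hs.2], by linarith [hs.1]⟩
  have := (h _ (hmaps ht)).scomp t ((hasDerivAt_id t).const_sub (a + b)).hasDerivWithinAt hmaps
  simpa [Function.comp_def] using this

theorem exists_eq_isIntegralCurveOn_Icc_right {f : ℝ → ℝ → ℝ} {K : ℝ≥0} {a b : ℝ}
    (hab : a ≤ b) (hlip : ∀ t ∈ Icc a b, LipschitzWith K (f t))
    (hcont : ∀ x, ContinuousOn (f · x) (Icc a b)) (x₁ : ℝ) :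
    ∃ y : ℝ → ℝ, y b = x₁ ∧ IsIntegralCurveOn y f (Icc a b) := by
  have hreflect : MapsTo (fun t => a + b - t) (Icc a b) (Icc a b) := fun t ht =>
    ⟨by linarith [ht.2], by linarith [ht.1]⟩
  obtain ⟨y, hya, hy⟩ := exists_eq_isIntegralCurveOn_Icc_left
    (f := fun t x => -f (a + b - t) x) hab (fun t ht => (hlip _ (hreflect ht)).neg)
    (fun x => ((hcont x).comp (continuousOn_const.sub continuousOn_id) hreflect).neg) x₁
  exact ⟨fun t => y (a + b - t), by simpa using hya, by simpa using hy.comp_reflect_Icc⟩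

noncomputable def terminalCurve (f : ℝ → ℝ → ℝ) (a b x₁ : ℝ) : ℝ → ℝ :=
  Classical.epsilon fun y => y b = x₁ ∧ IsIntegralCurveOn y f (Icc a b)

theorem terminalCurve_spec {f : ℝ → ℝ → ℝ} {K : ℝ≥0} {a b : ℝ}
    (hab : a ≤ b) (hlip : ∀ t ∈ Icc a b, LipschitzWith K (f t))
    (hcont : ∀ x, ContinuousOn (f · x) (Icc a b)) (x₁ : ℝ) :
    terminalCurve f a b x₁ b = x₁ ∧ IsIntegralCurveOn (terminalCurve f a b x₁) f (Icc a b) :=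
  Classical.epsilon_spec (exists_eq_isIntegralCurveOn_Icc_right hab hlip hcont x₁)

theorem IsIntegralCurveOn.eqOn_Icc_of_eq_right {E : Type*} [NormedAddCommGroup E]
    [NormedSpace ℝ E] {v : ℝ → E → E} {y₁ y₂ : ℝ → E} {K : ℝ≥0} {a b : ℝ}
    (hv : ∀ t ∈ Icc a b, LipschitzWith K (v t)) (h₁ : IsIntegralCurveOn y₁ v (Icc a b))
    (h₂ : IsIntegralCurveOn y₂ v (Icc a b)) (hb : y₁ b = y₂ b) : EqOn y₁ y₂ (Icc a b) :=
  ODE_solution_unique_of_mem_Icc_left (s := fun _ => univ)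
    (fun t ht => (hv t (Ioc_subset_Icc_self ht)).lipschitzOnWith) h₁.continuousOn
    (fun t ht => (h₁ t (Ioc_subset_Icc_self ht)).mono_of_mem_nhdsWithin
      (Icc_mem_nhdsLE_of_mem ht)) (fun _ _ => trivial) h₂.continuousOn
    (fun t ht => (h₂ t (Ioc_subset_Icc_self ht)).mono_of_mem_nhdsWithin
      (Icc_mem_nhdsLE_of_mem ht)) (fun _ _ => trivial) hb

noncomputable def optimalSpread (γ B w : ℝ) : ℝ := max B (γ⁻¹ - w)

noncomputable def sellValue (γ B w : ℝ) : ℝ :=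
  exp (-γ * optimalSpread γ B w) * (optimalSpread γ B w + w)

theorem le_optimalSpread (γ B w : ℝ) : B ≤ optimalSpread γ B w := le_max_left _ _

theorem mul_le_sellValue {γ B w δ : ℝ} (hγ : 0 < γ) (hδ : B ≤ δ) :
    exp (-γ * δ) * (δ + w) ≤ sellValue γ B w := by
  set m := optimalSpread γ B w
  have hmw : 1 ≤ γ * (m + w) := by
    have : γ⁻¹ - w ≤ m := le_max_right _ _
    rw [← inv_le_iff_one_le_mul₀' hγ]
    linarith
  have hcrit : 0 ≤ (δ - m) * (γ * (m + w) - 1) := by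
    rcases le_total (γ⁻¹ - w) B with h | h
    · have : m = B := max_eq_left h
      exact mul_nonneg (by linarith) (by linarith)
    · have : m = γ⁻¹ - w := max_eq_right h
      have : γ * (m + w) = 1 := by rw [this, sub_add_cancel, mul_inv_cancel₀ hγ.ne']
      simp [this]
  have hexp := mul_le_mul_of_nonneg_left (add_one_le_exp (γ * (δ - m)))
    (by nlinarith : 0 ≤ m + w)
  calc exp (-γ * δ) * (δ + w) ≤ exp (-γ * δ) * ((m + w) * exp (γ * (δ - m))) := by
        gcongr; nlinarith
    _ = exp (-γ * m) * (m + w) := by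
        rw [mul_left_comm, ← exp_add]; ring_nf

theorem isGreatest_sellValue {γ B w : ℝ} (hγ : 0 < γ) :
    IsGreatest ((fun δ => exp (-γ * δ) * (δ + w)) '' Ici B) (sellValue γ B w) :=
  ⟨⟨optimalSpread γ B w, le_optimalSpread γ B w, rfl⟩,
    forall_mem_image.2 fun _ hδ => mul_le_sellValue hγ hδ⟩

theorem lipschitzWith_sellValue {γ B : ℝ} (hγ : 0 < γ) :
    LipschitzWith (exp (-γ * B)).toNNReal (sellValue γ B) := by
  refine LipschitzWith.of_le_add_mul' _ fun w w' => ?_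
  set m := optimalSpread γ B w
  have hm : exp (-γ * m) ≤ exp (-γ * B) :=
    exp_le_exp.2 (by nlinarith [le_optimalSpread γ B w])
  calc sellValue γ B w = exp (-γ * m) * (m + w') + exp (-γ * m) * (w - w') := by
        rw [sellValue]; ring
    _ ≤ sellValue γ B w' + exp (-γ * m) * dist w w' := by
        gcongr
        · exact mul_le_sellValue hγ (le_optimalSpread γ B w)
        · exact (le_abs_self _).trans_eq (dist_eq _ _).symm
    _ ≤ sellValue γ B w' + exp (-γ * B) * dist w w' := by gcongr

theorem sSup_image_intensity {A γ B c u x : ℝ} (hA : 0 ≤ A) (hγ : 0 < γ) :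
    sSup ((fun δ => A * exp (-γ * δ + c) * (δ + u - x)) '' Ici B) =
      A * exp c * sellValue γ B (u - x) := by
  have : (fun δ => A * exp (-γ * δ + c) * (δ + u - x)) =
      (A * exp c * ·) ∘ fun δ => exp (-γ * δ) * (δ + (u - x)) := by
    funext δ; simp only [Function.comp_apply, exp_add]; ring
  rw [this, image_comp]
  exact ((monotone_mul_left_of_nonneg (by positivity)).map_isGreatest
    (isGreatest_sellValue hγ)).csSup_eq

noncomputable def hjbLevelField (A γ B : ℝ) (μ : ℝ → ℝ) (c : ℝ) (z : ℝ → ℝ) (t x : ℝ) : ℝ :=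
  c - A * exp (μ t) * sellValue γ B (z t - x)

section HJBLevelField

variable {A γ B c : ℝ} {μ z : ℝ → ℝ}

theorem hjbLevelField_eq_sub_sSup (hA : 0 ≤ A) (hγ : 0 < γ) (t x : ℝ) :
    hjbLevelField A γ B μ c z t x =
      c - sSup ((fun δ => A * exp (-γ * δ + μ t) * (δ + z t - x)) '' Ici B) := by
  rw [hjbLevelField, sSup_image_intensity hA hγ]

theorem exists_lipschitzWith_hjbLevelField {s : Set ℝ} (hs : IsCompact s) (hA : 0 ≤ A)
    (hγ : 0 < γ) (hμ : ContinuousOn μ s) :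
    ∃ K, ∀ t ∈ s, LipschitzWith K (hjbLevelField A γ B μ c z t) := by
  obtain ⟨C, hC⟩ := hs.exists_bound_of_continuousOn
    ((continuousOn_const (c := A)).mul hμ.rexp)
  refine ⟨_, fun t ht => LipschitzWith.of_le_add_mul' (C * exp (-γ * B)) fun x x' => ?_⟩
  have hG := (lipschitzWith_sellValue hγ (B := B)).le_add_mul (z t - x') (z t - x)
  rw [dist_sub_left, Real.coe_toNNReal _ (exp_nonneg _)] at hG
  have ha : A * exp (μ t) ≤ C := (le_abs_self _).trans (hC t ht)
  calc hjbLevelField A γ B μ c z t x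
      ≤ c - A * exp (μ t) * (sellValue γ B (z t - x') - exp (-γ * B) * dist x' x) := by
        rw [hjbLevelField]; gcongr; linarith
    _ = hjbLevelField A γ B μ c z t x' + A * exp (μ t) * exp (-γ * B) * dist x x' := by
        rw [hjbLevelField, dist_comm]; ring
    _ ≤ hjbLevelField A γ B μ c z t x' + C * exp (-γ * B) * dist x x' := by gcongr

theorem continuousOn_hjbLevelField {s : Set ℝ} (hγ : 0 < γ) (hμ : ContinuousOn μ s)
    (hz : ContinuousOn z s) (x : ℝ) : ContinuousOn (hjbLevelField A γ B μ c z · x) s :=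
  continuousOn_const.sub ((continuousOn_const.mul hμ.rexp).mul
    ((lipschitzWith_sellValue hγ).continuous.comp_continuousOn (hz.sub continuousOn_const)))

end HJBLevelField

section HJBSystem

variable (T A γ B : ℝ) (μ : ℝ → ℝ) (r g : ℤ → ℝ) (Qlow Qbar : ℤ)

def IsHJBSolution (h : ℝ → ℤ → ℝ) : Prop :=
  IsIntegralCurveOn (h · Qlow) (fun _ _ => r Qlow) (Icc 0 T) ∧
  (∀ q, Qlow < q → q ≤ Qbar →
    IsIntegralCurveOn (h · q) (hjbLevelField A γ B μ (r q) (h · (q - 1))) (Icc 0 T)) ∧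
  ∀ q, Qlow ≤ q → q ≤ Qbar → h T q = g q

noncomputable def hjbLevel : ℕ → ℝ → ℝ
  | 0 => terminalCurve (fun _ _ => r Qlow) 0 T (g Qlow)
  | n + 1 => terminalCurve (hjbLevelField A γ B μ (r (Qlow + (n + 1 : ℕ))) (hjbLevel n)) 0 T
      (g (Qlow + (n + 1 : ℕ)))

noncomputable def hjbSolution (t : ℝ) (q : ℤ) : ℝ := hjbLevel T A γ B μ r g Qlow (q - Qlow).toNat t

variable {T A γ B μ r g Qlow Qbar}

theorem hjbLevel_zero_spec (hT : 0 ≤ T) :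
    hjbLevel T A γ B μ r g Qlow 0 T = g Qlow ∧
      IsIntegralCurveOn (hjbLevel T A γ B μ r g Qlow 0) (fun _ _ => r Qlow) (Icc 0 T) :=
  terminalCurve_spec (K := 0) hT (fun _ _ => LipschitzWith.const _) (fun _ => continuousOn_const) _

theorem hjbLevel_succ_spec (hT : 0 ≤ T) (hA : 0 ≤ A) (hγ : 0 < γ)
    (hμ : ContinuousOn μ (Icc 0 T)) {n : ℕ}
    (hn : ContinuousOn (hjbLevel T A γ B μ r g Qlow n) (Icc 0 T)) :
    hjbLevel T A γ B μ r g Qlow (n + 1) T = g (Qlow + (n + 1 : ℕ)) ∧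
      IsIntegralCurveOn (hjbLevel T A γ B μ r g Qlow (n + 1))
        (hjbLevelField A γ B μ (r (Qlow + (n + 1 : ℕ))) (hjbLevel T A γ B μ r g Qlow n))
        (Icc 0 T) :=
  have ⟨_, hK⟩ := exists_lipschitzWith_hjbLevelField (B := B) (c := r (Qlow + (n + 1 : ℕ)))
    (z := hjbLevel T A γ B μ r g Qlow n) isCompact_Icc hA hγ hμ
  terminalCurve_spec hT hK (continuousOn_hjbLevelField hγ hμ hn) _

theorem continuousOn_hjbLevel (hT : 0 ≤ T) (hA : 0 ≤ A) (hγ : 0 < γ)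
    (hμ : ContinuousOn μ (Icc 0 T)) :
    ∀ n, ContinuousOn (hjbLevel T A γ B μ r g Qlow n) (Icc 0 T)
  | 0 => (hjbLevel_zero_spec hT).2.continuousOn
  | n + 1 => (hjbLevel_succ_spec hT hA hγ hμ (continuousOn_hjbLevel hT hA hγ hμ n)).2.continuousOn

theorem hjbLevel_apply_right (hT : 0 ≤ T) (hA : 0 ≤ A) (hγ : 0 < γ)
    (hμ : ContinuousOn μ (Icc 0 T)) : ∀ n : ℕ, hjbLevel T A γ B μ r g Qlow n T = g (Qlow + n)
  | 0 => by simpa using (hjbLevel_zero_spec hT).1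
  | n + 1 => (hjbLevel_succ_spec hT hA hγ hμ (continuousOn_hjbLevel hT hA hγ hμ n)).1

theorem hjbSolution_add_nat (t : ℝ) (n : ℕ) :
    hjbSolution T A γ B μ r g Qlow t (Qlow + n) = hjbLevel T A γ B μ r g Qlow n t := by
  simp [hjbSolution]

theorem isHJBSolution_hjbSolution (hT : 0 ≤ T) (hA : 0 ≤ A) (hγ : 0 < γ)
    (hμ : ContinuousOn μ (Icc 0 T)) :
    IsHJBSolution T A γ B μ r g Qlow Qbar (hjbSolution T A γ B μ r g Qlow) := by
  refine ⟨by simpa [hjbSolution] using (hjbLevel_zero_spec hT).2, fun q hq _ => ?_,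
    fun q hq _ => ?_⟩
  · obtain ⟨n, rfl⟩ : ∃ n : ℕ, q = Qlow + (n + 1 : ℕ) := ⟨(q - Qlow - 1).toNat, by omega⟩
    have hprev : Qlow + ((n + 1 : ℕ) : ℤ) - 1 = Qlow + n := by push_cast; ring
    simp only [hprev, hjbSolution_add_nat]
    exact (hjbLevel_succ_spec hT hA hγ hμ (continuousOn_hjbLevel hT hA hγ hμ n)).2
  · obtain ⟨n, rfl⟩ : ∃ n : ℕ, q = Qlow + n := ⟨(q - Qlow).toNat, by omega⟩
    rw [hjbSolution_add_nat, hjbLevel_apply_right hT hA hγ hμ]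

theorem IsHJBSolution.eqOn {h₁ h₂ : ℝ → ℤ → ℝ} (hA : 0 ≤ A) (hγ : 0 < γ)
    (hμ : ContinuousOn μ (Icc 0 T))
    (h₁sol : IsHJBSolution T A γ B μ r g Qlow Qbar h₁)
    (h₂sol : IsHJBSolution T A γ B μ r g Qlow Qbar h₂) {q : ℤ} (hq : Qlow ≤ q) (hq' : q ≤ Qbar) :
    EqOn (h₁ · q) (h₂ · q) (Icc 0 T) := by
  induction q, hq using Int.leInduction with
  | base =>
    exact IsIntegralCurveOn.eqOn_Icc_of_eq_right (K := 0) (fun _ _ => LipschitzWith.const _)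
      h₁sol.1 h₂sol.1 ((h₁sol.2.2 _ le_rfl hq').trans (h₂sol.2.2 _ le_rfl hq').symm)
  | succ q hq ih =>
    have hlt : Qlow < q + 1 := by omega
    obtain ⟨K, hK⟩ := exists_lipschitzWith_hjbLevelField (B := B) (c := r (q + 1))
      (z := (h₁ · q)) isCompact_Icc hA hγ hμ
    have h₂curve : IsIntegralCurveOn (h₂ · (q + 1))
        (hjbLevelField A γ B μ (r (q + 1)) (h₁ · q)) (Icc 0 T) := fun t ht => by
      simpa only [hjbLevelField, add_sub_cancel_right, ih (by omega) ht] using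
        h₂sol.2.1 _ hlt hq' t ht
    have h₁curve : IsIntegralCurveOn (h₁ · (q + 1))
        (hjbLevelField A γ B μ (r (q + 1)) (h₁ · q)) (Icc 0 T) := by
      simpa only [add_sub_cancel_right] using h₁sol.2.1 _ hlt hq'
    exact IsIntegralCurveOn.eqOn_Icc_of_eq_right hK h₁curve h₂curve
      ((h₁sol.2.2 _ hlt.le hq').trans (h₂sol.2.2 _ hlt.le hq').symm)

end HJBSystem

theorem isOversellHJBSolution_iff {T A κ β B α₁ α₂ φ₁ φ₂ : ℝ} {Qlow Qbar : ℤ}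
    {δbar : ℝ → ℝ} {h : ℝ → ℤ → ℝ} (hA : 0 ≤ A) (hκβ : 0 < κ + β) :
    IsOversellHJBSolution T A κ β B α₁ α₂ φ₁ φ₂ Qlow Qbar δbar h ↔
      IsHJBSolution T A (κ + β) B (fun t => β * δbar t)
        (fun q => (if 0 ≤ q then φ₁ else φ₂) * (q : ℝ) ^ 2)
        (fun q => -((if 0 ≤ q then α₁ else α₂) * (q : ℝ) ^ 2)) Qlow Qbar h := by
  simp only [IsOversellHJBSolution, IsHJBSolution, IsIntegralCurveOn,
    hjbLevelField_eq_sub_sSup hA hκβ]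

theorem oversell_HJB_existence_uniqueness_general
    (T A κ β B α₁ α₂ φ₁ φ₂ : ℝ) (Qlow Qbar : ℤ)
    (hT : 0 < T) (hA : 0 < A) (hκβ : 0 < κ + β)
    (δbar : ℝ → ℝ) (hδbar : ContinuousOn δbar (Set.Icc 0 T)) :
    (∃ h : ℝ → ℤ → ℝ, IsOversellHJBSolution T A κ β B α₁ α₂ φ₁ φ₂ Qlow Qbar δbar h) ∧
    ∀ h₁ h₂ : ℝ → ℤ → ℝ,
      IsOversellHJBSolution T A κ β B α₁ α₂ φ₁ φ₂ Qlow Qbar δbar h₁ →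
      IsOversellHJBSolution T A κ β B α₁ α₂ φ₁ φ₂ Qlow Qbar δbar h₂ →
      ∀ t ∈ Set.Icc (0 : ℝ) T, ∀ q : ℤ, Qlow ≤ q → q ≤ Qbar → h₁ t q = h₂ t q := by
  have hμ : ContinuousOn (fun t => β * δbar t) (Icc 0 T) := continuousOn_const.mul hδbar
  simp only [isOversellHJBSolution_iff hA.le hκβ]
  exact ⟨⟨_, isHJBSolution_hjbSolution hT.le hA.le hκβ hμ⟩,
    fun _ _ h₁sol h₂sol _ ht _ hq hq' => h₁sol.eqOn hA.le hκβ hμ h₂sol hq hq' ht⟩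

/-- Existence and uniqueness for the HJB ODE system of the overselling
model: given a continuous mean quote `δ̄`, there is a unique continuously
differentiable solution `h = (h_{Q̲}, …, h_{Q̄})` on `[0, T]`. -/
theorem oversell_HJB_existence_uniqueness
    (T A κ β B α₁ α₂ φ₁ φ₂ : ℝ) (Qlow Qbar : ℤ)
    (hT : 0 < T) (hA : 0 < A) (hκ : 0 ≤ κ) (hβ : 0 ≤ β) (hκβ : 0 < κ + β)
    (hα₁ : 0 < α₁) (hα₂ : 0 < α₂) (hφ₁ : 0 < φ₁) (hφ₂ : 0 < φ₂)
    (hQlow : Qlow ≤ 0) (hQbar : 0 ≤ Qbar) (hQ : Qlow < Qbar)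
    (δbar : ℝ → ℝ) (hδbar : ContinuousOn δbar (Set.Icc 0 T)) :
    (∃ h : ℝ → ℤ → ℝ, IsOversellHJBSolution T A κ β B α₁ α₂ φ₁ φ₂ Qlow Qbar δbar h) ∧
    ∀ h₁ h₂ : ℝ → ℤ → ℝ,
      IsOversellHJBSolution T A κ β B α₁ α₂ φ₁ φ₂ Qlow Qbar δbar h₁ →
      IsOversellHJBSolution T A κ β B α₁ α₂ φ₁ φ₂ Qlow Qbar δbar h₂ →
      ∀ t ∈ Set.Icc (0 : ℝ) T, ∀ q : ℤ, Qlow ≤ q → q ≤ Qbar → h₁ t q = h₂ t q :=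
  oversell_HJB_existence_uniqueness_general T A κ β B α₁ α₂ φ₁ φ₂ Qlow Qbar hT hA hκβ δbar hδbar
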